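/- arXiv:1909.00634 — 3 statements merged into one kernel-verified Lean document; each statement's English description precedes it below -/
import Mathlib

section
/- The polynomial x^3 + 36x^2 - 1728 is irreducible over ℚ, and if α is a root of it in an algebraic closure of ℚ, then α^3 - 432 is not a square in ℚ(α). -/
/-!
Irreducibility: `g` is monic of degree 3 and has no root modulo 7.
Non-squareness: `g` has a real root `r ∈ (6, 7)`, so sending `α ↦ r` embeds `ℚ(α)` into `ℝ`;
this embedding maps `α ^ 3 - 432` to `r ^ 3 - 432 < 0`, which is not a square in `ℝ`.
-/

open Polynomial IntermediateField

theorem Polynomial.Monic.irreducible_map_rat_of_forall_eval_zmod_ne_zero {p : ℕ} (hp : p.Prime)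
    {f : ℤ[X]} (hf : f.Monic) (h2 : 2 ≤ f.natDegree) (h3 : f.natDegree ≤ 3)
    (hroot : ∀ x : ZMod p, (f.map (Int.castRingHom (ZMod p))).eval x ≠ 0) :
    Irreducible (f.map (Int.castRingHom ℚ)) := by
  have : Fact p.Prime := ⟨hp⟩
  refine hf.irreducible_iff_irreducible_map_fraction_map.mp
    (Monic.irreducible_of_irreducible_map (Int.castRingHom (ZMod p)) f hf ?_)
  have hdeg := hf.natDegree_map (Int.castRingHom (ZMod p))
  rw [(hf.map _).irreducible_iff_roots_eq_zero_of_degree_le_three (hdeg ▸ h2) (hdeg ▸ h3)]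
  exact Multiset.eq_zero_of_forall_notMem fun x hx => hroot x (isRoot_of_mem_roots hx)

theorem irreducible_X_pow_three_add_36_mul_X_sq_sub_1728 :
    Irreducible (X ^ 3 + 36 * X ^ 2 - 1728 : ℚ[X]) := by
  have hmon : (X ^ 3 + 36 * X ^ 2 - 1728 : ℤ[X]).Monic := by monicity!
  have hdeg : (X ^ 3 + 36 * X ^ 2 - 1728 : ℤ[X]).natDegree = 3 := by compute_degree!
  have h := hmon.irreducible_map_rat_of_forall_eval_zmod_ne_zero (p := 7) (by norm_num)
    (by omega) hdeg.le
    (by simp only [Polynomial.map_sub, Polynomial.map_add, Polynomial.map_mul, Polynomial.map_pow,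
      Polynomial.map_X, Polynomial.map_ofNat, eval_sub, eval_add, eval_mul, eval_pow, eval_X,
      eval_ofNat]; decide)
  simpa [Polynomial.map_ofNat] using h

theorem exists_root_X_pow_three_add_36_mul_X_sq_sub_1728_mem_Ioo :
    ∃ r ∈ Set.Ioo (6 : ℝ) 7, r ^ 3 + 36 * r ^ 2 - 1728 = 0 :=
  intermediate_value_Ioo (by norm_num) (by fun_prop) (by norm_num)

theorem IntermediateField.not_exists_sq_eq_of_ringHom_neg {F E R : Type*} [Field F] [Field E]
    [Algebra F E] [CommRing R] [LinearOrder R] [IsStrictOrderedRing R]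
    {K : IntermediateField F E} (φ : K →+* R) {z : E} (hz : z ∈ K) (hneg : φ ⟨z, hz⟩ < 0) :
    ¬ ∃ y ∈ K, y ^ 2 = z := by
  rintro ⟨y, hy, rfl⟩
  have hsq : φ ⟨y ^ 2, hz⟩ = φ ⟨y, hy⟩ ^ 2 := by rw [← map_pow]; rfl
  exact (sq_nonneg (φ ⟨y, hy⟩)).not_gt (hsq ▸ hneg)

theorem stmt_0 :
    Irreducible (X ^ 3 + 36 * X ^ 2 - 1728 : ℚ[X]) ∧
    ∀ α : AlgebraicClosure ℚ,
      aeval α (X ^ 3 + 36 * X ^ 2 - 1728 : ℚ[X]) = 0 →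
      ¬ ∃ y ∈ IntermediateField.adjoin ℚ {α}, y ^ 2 = α ^ 3 - 432 := by
  refine ⟨irreducible_X_pow_three_add_36_mul_X_sq_sub_1728, fun α hα => ?_⟩
  have hmon : (X ^ 3 + 36 * X ^ 2 - 1728 : ℚ[X]).Monic := by monicity!
  have hint : IsIntegral ℚ α := ⟨_, hmon, hα⟩
  have hmin := minpoly.eq_of_irreducible_of_monic
    irreducible_X_pow_three_add_36_mul_X_sq_sub_1728 hα hmon
  obtain ⟨r, ⟨hr6, hr7⟩, hr⟩ := exists_root_X_pow_three_add_36_mul_X_sq_sub_1728_mem_Ioo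
  have hroot : r ∈ (minpoly ℚ α).aroots ℝ := by
    rw [← hmin, mem_aroots]
    exact ⟨hmon.ne_zero, by simpa [map_ofNat] using hr⟩
  let φ : ℚ⟮α⟯ →ₐ[ℚ] ℝ := (algHomAdjoinIntegralEquiv ℚ hint).symm ⟨r, hroot⟩
  have hφ : φ (AdjoinSimple.gen ℚ α) = r := algHomAdjoinIntegralEquiv_symm_apply_gen ℚ hint _
  have hz : α ^ 3 - 432 ∈ ℚ⟮α⟯ := sub_mem (pow_mem (mem_adjoin_simple_self ℚ α) 3) (by simp)
  refine not_exists_sq_eq_of_ringHom_neg φ.toRingHom hz ?_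
  have hgen : (⟨α ^ 3 - 432, hz⟩ : ℚ⟮α⟯) = AdjoinSimple.gen ℚ α ^ 3 - 432 := rfl
  rw [AlgHom.toRingHom_eq_coe, RingHom.coe_coe, hgen, map_sub, map_pow, map_ofNat, hφ]
  nlinarith
end

section
/- Let α be a root of x^3 - 3x - 1 over ℚ. For a nonzero rational number r, the equation z^3 = 4r^2 has a solution z in ℚ(α) if and only if 4r^2 is a cube in ℚ. -/
open Polynomial IntermediateField

/-!
The roots of `X³ - 3X - 1` are `α`, `2 - α²` and `α² - α - 2`, so `ℚ(α)` is a normal extension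
of degree at most `3`. If it contained a cube root `z` of a rational `c` that is not a cube in `ℚ`,
then `X³ - c` would be the minimal polynomial of `z`, so `3 ∣ [ℚ(α) : ℚ]`; by normality the other
roots `ωz` of `X³ - c` would lie in `ℚ(α)` as well, so the primitive cube root of unity `ω`
would too, and `2 ∣ [ℚ(α) : ℚ]`. Hence `6` would divide a degree between `1` and `3`.
-/

theorem isPrimitiveRoot_three_of_sq_add_self_add_one_eq_zero {R : Type*} [CommRing R] [IsDomain R]
    [NeZero (3 : R)] {ω : R} (h : ω ^ 2 + ω + 1 = 0) : IsPrimitiveRoot ω 3 := by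
  refine isPrimitiveRoot_of_mem_nthRootsFinset Nat.prime_three ?_ ?_
  · rw [mem_nthRootsFinset three_pos]
    linear_combination (ω - 1) * h
  · rintro rfl
    exact NeZero.ne (3 : R) (by linear_combination h)

theorem IsPrimitiveRoot.totient_dvd_finrank_rat {K : Type*} [Field K] [Algebra ℚ K]
    [FiniteDimensional ℚ K] {n : ℕ} (hn : 0 < n) {ω : K} (hω : IsPrimitiveRoot ω n) :
    n.totient ∣ Module.finrank ℚ K := by
  have hroot : aeval ω (cyclotomic n ℚ) = 0 := by
    rw [aeval_def, eval₂_eq_eval_map, map_cyclotomic]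
    exact hω.isRoot_cyclotomic hn
  have hmin : minpoly ℚ ω = cyclotomic n ℚ :=
    (minpoly.eq_of_irreducible_of_monic (cyclotomic.irreducible_rat hn) hroot
      (cyclotomic.monic n ℚ)).symm
  simpa [hmin, natDegree_cyclotomic] using minpoly.degree_dvd (IsIntegral.of_finite ℚ ω)

section PureCubic

variable {F K : Type*} [Field F] [Field K] [Algebra F K] {c : F} {z : K}

theorem minpoly_eq_X_pow_three_sub_C (hc : ∀ b : F, b ^ 3 ≠ c) (hz : z ^ 3 = algebraMap F K c) :
    minpoly F z = X ^ 3 - C c :=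
  (minpoly.eq_of_irreducible_of_monic (X_pow_sub_C_irreducible_of_prime Nat.prime_three hc)
    (by simp [hz]) (monic_X_pow_sub_C c three_ne_zero)).symm

theorem three_dvd_finrank_of_pow_three_eq [FiniteDimensional F K] (hc : ∀ b : F, b ^ 3 ≠ c)
    (hz : z ^ 3 = algebraMap F K c) : 3 ∣ Module.finrank F K := by
  simpa [minpoly_eq_X_pow_three_sub_C hc hz] using minpoly.degree_dvd (IsIntegral.of_finite F z)

theorem exists_sq_add_self_add_one_eq_zero_of_pow_three_eq [Normal F K]
    (hc : ∀ b : F, b ^ 3 ≠ c) (hz : z ^ 3 = algebraMap F K c) : ∃ ω : K, ω ^ 2 + ω + 1 = 0 := by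
  have hz0 : z ≠ 0 := by
    rintro rfl
    refine hc 0 ((algebraMap F K).injective ?_)
    simp [← hz]
  have hfactor : (minpoly F z).map (algebraMap F K) =
      (X - C z) * (X ^ 2 + C z * X + C z ^ 2) := by
    rw [minpoly_eq_X_pow_three_sub_C hc hz, Polynomial.map_sub, Polynomial.map_pow, map_X, map_C,
      ← hz, C_pow]
    ring
  have hquad : (X ^ 2 + C z * X + C z ^ 2 : K[X]).Splits :=
    (Normal.splits ‹_› z).of_dvd
      (Polynomial.map_ne_zero (minpoly.ne_zero (Normal.isIntegral ‹_› z)))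
      (hfactor ▸ dvd_mul_left _ _)
  have hdeg : (X ^ 2 + C z * X + C z ^ 2 : K[X]).degree = 2 := by compute_degree!
  obtain ⟨w, hw⟩ := hquad.exists_eval_eq_zero (by simp [hdeg])
  simp only [eval_add, eval_mul, eval_pow, eval_X, eval_C] at hw
  refine ⟨w / z, ?_⟩
  field_simp
  linear_combination hw

end PureCubic

theorem six_dvd_finrank_of_pow_three_eq {K : Type*} [Field K] [Algebra ℚ K]
    [FiniteDimensional ℚ K] [Normal ℚ K] {c : ℚ} (hc : ∀ q : ℚ, q ^ 3 ≠ c) {z : K}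
    (hz : z ^ 3 = algebraMap ℚ K c) : 6 ∣ Module.finrank ℚ K := by
  have : CharZero K := charZero_of_injective_algebraMap (algebraMap ℚ K).injective
  obtain ⟨ω, hω⟩ := exists_sq_add_self_add_one_eq_zero_of_pow_three_eq hc hz
  have h2 : Nat.totient 3 ∣ Module.finrank ℚ K :=
    (isPrimitiveRoot_three_of_sq_add_self_add_one_eq_zero hω).totient_dvd_finrank_rat three_pos
  rw [Nat.totient_prime Nat.prime_three] at h2
  exact Nat.Coprime.mul_dvd_of_dvd_of_dvd (by norm_num) h2
    (three_dvd_finrank_of_pow_three_eq hc hz)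

namespace IntermediateField

variable {F L : Type*} [Field F] [Field L] [Algebra F L] {x : L} {p : F[X]}

theorem finrank_adjoin_simple_le_natDegree (hp : p ≠ 0) (hx : aeval x p = 0) :
    Module.finrank F F⟮x⟯ ≤ p.natDegree := by
  rw [adjoin.finrank (IsAlgebraic.isIntegral ⟨p, hp, hx⟩)]
  exact natDegree_le_natDegree (minpoly.degree_le_of_ne_zero F x hp hx)

theorem normal_adjoin_simple_of_rootSet_subset [IsAlgClosed L] (hp : p ≠ 0) (hx : aeval x p = 0)
    (hroots : p.rootSet L ⊆ F⟮x⟯) : Normal F F⟮x⟯ := by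
  have hadjoin : F⟮x⟯ = adjoin F (p.rootSet L) :=
    le_antisymm (adjoin_simple_le_iff.mpr (subset_adjoin F _ (mem_rootSet.mpr ⟨hp, hx⟩)))
      (adjoin_le_iff.mpr hroots)
  rw [hadjoin]
  have := adjoin_rootSet_isSplittingField (p := p) (IsAlgClosed.splits (p.map (algebraMap F L)))
  exact Normal.of_isSplittingField p

end IntermediateField

theorem cube_sub_three_mul_sub_one_eq_mul {R : Type*} [CommRing R] {α : R}
    (hα : α ^ 3 - 3 * α - 1 = 0) (x : R) :
    x ^ 3 - 3 * x - 1 = (x - α) * (x - (2 - α ^ 2)) * (x - (α ^ 2 - α - 2)) := by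
  linear_combination -((1 - α) * x + (α ^ 2 - α - 1)) * hα

theorem normal_adjoin_root_cube_sub_three_mul_sub_one {F L : Type*} [Field F] [Field L]
    [Algebra F L] [IsAlgClosed L] {α : L} (hα : α ^ 3 - 3 * α - 1 = 0) : Normal F F⟮α⟯ := by
  have haeval (y : L) : aeval y (X ^ 3 - C 3 * X - 1 : F[X]) = y ^ 3 - 3 * y - 1 := by
    simp [map_ofNat (algebraMap F L) 3]
  refine normal_adjoin_simple_of_rootSet_subset (x := α) (p := (X ^ 3 - C 3 * X - 1 : F[X]))
    (Monic.ne_zero (by monicity!)) (by rw [haeval, hα]) fun y hy => ?_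
  rw [mem_rootSet, haeval, cube_sub_three_mul_sub_one_eq_mul hα] at hy
  have hαK : α ∈ F⟮α⟯ := mem_adjoin_simple_self F α
  have h2K : (2 : L) ∈ F⟮α⟯ := ofNat_mem _ 2
  obtain (rfl | rfl) | rfl : (y = α ∨ y = 2 - α ^ 2) ∨ y = α ^ 2 - α - 2 := by
    simpa [sub_eq_zero] using hy.2
  · exact hαK
  · exact sub_mem h2K (pow_mem hαK 2)
  · exact sub_mem (sub_mem (pow_mem hαK 2) hαK) h2K

theorem stmt_1_general (α : AlgebraicClosure ℚ) (hα : α ^ 3 - 3 * α - 1 = 0)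
    (r : ℚ) :
    (∃ z ∈ IntermediateField.adjoin ℚ {α},
        z ^ 3 = ((4 * r ^ 2 : ℚ) : AlgebraicClosure ℚ)) ↔
      ∃ q : ℚ, q ^ 3 = 4 * r ^ 2 := by
  generalize 4 * r ^ 2 = c
  constructor
  · rintro ⟨z, hz, hz3⟩
    by_contra! hcube
    have hf0 : (X ^ 3 - C 3 * X - 1 : ℚ[X]) ≠ 0 := Monic.ne_zero (by monicity!)
    have hfα : aeval α (X ^ 3 - C 3 * X - 1 : ℚ[X]) = 0 := by simp [hα]
    have : Normal ℚ ℚ⟮α⟯ := normal_adjoin_root_cube_sub_three_mul_sub_one hα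
    have := adjoin.finiteDimensional (IsAlgebraic.isIntegral ⟨_, hf0, hfα⟩)
    have h6 := six_dvd_finrank_of_pow_three_eq hcube (z := (⟨z, hz⟩ : ℚ⟮α⟯))
      (by ext; simp [hz3])
    have h3 := finrank_adjoin_simple_le_natDegree hf0 hfα
    have hpos := Module.finrank_pos (R := ℚ) (M := ℚ⟮α⟯)
    have hdeg : (X ^ 3 - C 3 * X - 1 : ℚ[X]).natDegree = 3 := by compute_degree!
    omega
  · rintro ⟨q, hq⟩
    exact ⟨algebraMap ℚ _ q, IntermediateField.algebraMap_mem _ q,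
      by rw [← map_pow, hq, eq_ratCast]⟩

theorem stmt_1 (α : AlgebraicClosure ℚ) (hα : α ^ 3 - 3 * α - 1 = 0)
    (r : ℚ) (hr : r ≠ 0) :
    (∃ z ∈ IntermediateField.adjoin ℚ {α},
        z ^ 3 = ((4 * r ^ 2 : ℚ) : AlgebraicClosure ℚ)) ↔
      ∃ q : ℚ, q ^ 3 = 4 * r ^ 2 :=
  stmt_1_general α hα r
end

section
/- The polynomial 7x^12 + 308x^11 - 2954x^10 - 19852x^9 - 35231x^8 - 82264x^7 - 111916x^6 - 42168x^5 + 15673x^4 + 14756x^3 + 1302x^2 + 196x - 1 is irreducible over ℚ. -/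
/-!
By Gauss's lemma it suffices to show that the primitive integer polynomial `f₇` is irreducible in
`ℤ[X]`. Its leading coefficient 7 is a unit modulo 13 and modulo 53, so every divisor of `f₇` keeps
its degree after reduction. Modulo 13, `f₇` is 7 times a product of three irreducible quartics, and
modulo 53 it is 7 times a product of four irreducible cubics. Hence the degree of any divisor is
divisible by 4 and by 3, so it is 0 or 12, and primitivity rules out constant proper factors.
-/

open Polynomial

namespace Polynomial

theorem Monic.eq_X_sq_add_C_mul_X_add_C {R : Type*} [CommSemiring R] {g : R[X]} (hg : g.Monic)
    (h2 : g.natDegree = 2) : g = X ^ 2 + C (g.coeff 1) * X + C (g.coeff 0) := by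
  conv_lhs => rw [hg.as_sum, h2]
  simp only [Finset.sum_range_succ, Finset.range_one, Finset.sum_singleton, pow_zero, mul_one,
    pow_one]
  ring

theorem coeff_eq_of_monic_quartic_eq {R : Type*} [Semiring R] {a b c d a' b' c' d' : R}
    (h : X ^ 4 + C a * X ^ 3 + C b * X ^ 2 + C c * X + C d =
      X ^ 4 + C a' * X ^ 3 + C b' * X ^ 2 + C c' * X + C d') :
    a = a' ∧ b = b' ∧ c = c' ∧ d = d' := by
  refine ⟨?_, ?_, ?_, ?_⟩ <;> [have := congrArg (coeff · 3) h; have := congrArg (coeff · 2) h;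
    have := congrArg (coeff · 1) h; have := congrArg (coeff · 0) h] <;>
    simpa [coeff_X, coeff_C, coeff_X_pow] using this

section IsDomain

variable {R : Type*} [CommRing R] [IsDomain R]

theorem irreducible_monic_cubic {a b c : R} (hroot : ∀ x : R, x ^ 3 + a * x ^ 2 + b * x + c ≠ 0) :
    Irreducible (X ^ 3 + C a * X ^ 2 + C b * X + C c) := by
  have hdeg : (X ^ 3 + C a * X ^ 2 + C b * X + C c).natDegree = 3 := by compute_degree!
  have hmonic : (X ^ 3 + C a * X ^ 2 + C b * X + C c).Monic := by monicity!
  rw [hmonic.irreducible_iff_roots_eq_zero_of_degree_le_three (by omega) (by omega)]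
  refine Multiset.eq_zero_of_forall_notMem fun x hx => hroot x ?_
  simpa using (mem_roots hmonic.ne_zero).mp hx

/-- A factorisation `(X ^ 2 + p X + q) * (X ^ 2 + r X + s)` forces `r = a - p` and
`s = b - q - p r`; `hquad` says that the two remaining coefficient equations have no solution. -/
theorem irreducible_monic_quartic {a b c d : R}
    (hroot : ∀ x : R, x ^ 4 + a * x ^ 3 + b * x ^ 2 + c * x + d ≠ 0)
    (hquad : ∀ p q : R, p * (b - q - p * (a - p)) + q * (a - p) = c →
      q * (b - q - p * (a - p)) = d → False) :
    Irreducible (X ^ 4 + C a * X ^ 3 + C b * X ^ 2 + C c * X + C d) := by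
  have hdeg : (X ^ 4 + C a * X ^ 3 + C b * X ^ 2 + C c * X + C d).natDegree = 4 := by
    compute_degree!
  have hmonic : (X ^ 4 + C a * X ^ 3 + C b * X ^ 2 + C c * X + C d).Monic := by monicity!
  refine (hmonic.irreducible_iff_lt_natDegree_lt (by rintro h; simp [h] at hdeg)).2 ?_
  rintro g hg hgdeg ⟨h, hfgh⟩
  rw [hdeg, Finset.mem_Ioc] at hgdeg
  obtain hg1 | hg2 : g.natDegree = 1 ∨ g.natDegree = 2 := by omega
  · rw [hg.eq_X_add_C hg1] at hfgh
    generalize g.coeff 0 = q at hfgh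
    exact hroot (-q) (by simpa using congrArg (eval (-q)) hfgh)
  · have hh : h.Monic := hg.of_mul_monic_left (hfgh ▸ hmonic)
    have hh2 : h.natDegree = 2 := by
      have := congrArg natDegree hfgh
      rw [hg.natDegree_mul hh, hdeg, hg2] at this
      omega
    rw [hg.eq_X_sq_add_C_mul_X_add_C hg2, hh.eq_X_sq_add_C_mul_X_add_C hh2] at hfgh
    generalize g.coeff 1 = p, g.coeff 0 = q, h.coeff 1 = r, h.coeff 0 = s at hfgh
    have hexp : (X ^ 2 + C p * X + C q) * (X ^ 2 + C r * X + C s) = X ^ 4 + C (p + r) * X ^ 3 +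
        C (q + p * r + s) * X ^ 2 + C (p * s + q * r) * X + C (q * s) := by
      simp only [map_add, map_mul]
      ring
    obtain ⟨rfl, rfl, rfl, rfl⟩ := coeff_eq_of_monic_quartic_eq (hfgh.trans hexp)
    exact hquad p q (by ring) (by ring)

end IsDomain

theorem dvd_natDegree_of_dvd_prod {K : Type*} [Field K] {n : ℕ} {l : List K[X]}
    (hl : ∀ r ∈ l, Irreducible r ∧ r.natDegree = n) {q : K[X]} (hq : q ∣ l.prod) :
    n ∣ q.natDegree := by
  induction q using UniqueFactorizationMonoid.induction_on_prime with
  | h₁ =>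
    exact absurd rfl (hl 0 (List.prod_eq_zero_iff.mp (zero_dvd_iff.mp hq))).1.ne_zero
  | h₂ u hu => rw [natDegree_eq_zero_of_isUnit hu]; exact dvd_zero n
  | h₃ a p ha hp ih =>
    obtain ⟨r, hr, hpr⟩ := hp.dvd_prod_iff.mp (dvd_of_mul_right_dvd hq)
    have hpdeg : p.natDegree = n :=
      (natDegree_eq_of_degree_eq (degree_eq_degree_of_associated
        (hp.irreducible.associated_of_dvd (hl r hr).1 hpr))).trans (hl r hr).2
    rw [natDegree_mul hp.ne_zero ha, hpdeg]
    exact dvd_add (dvd_refl n) (ih (dvd_of_mul_left_dvd hq))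

theorem natDegree_map_eq_of_dvd {R S : Type*} [Semiring R] [NoZeroDivisors R] [Semiring S]
    (φ : R →+* S) {f a : R[X]} (hf : φ f.leadingCoeff ≠ 0) (ha : a ∣ f) :
    (a.map φ).natDegree = a.natDegree := by
  obtain ⟨b, rfl⟩ := ha
  rw [leadingCoeff_mul, map_mul] at hf
  exact natDegree_map_of_leadingCoeff_ne_zero φ (left_ne_zero_of_mul hf)

theorem dvd_natDegree_of_map_eq_C_mul_prod {R K : Type*} [CommRing R] [IsDomain R] [Field K]
    (φ : R →+* K) {f : R[X]} {u : K} {l : List K[X]} {n : ℕ} (hf : f.map φ = C u * l.prod)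
    (hlc : φ f.leadingCoeff ≠ 0) (hl : ∀ r ∈ l, Irreducible r ∧ r.natDegree = n)
    {a : R[X]} (ha : a ∣ f) : n ∣ a.natDegree := by
  have hu : u ≠ 0 := by
    rintro rfl
    apply hlc
    rw [← leadingCoeff_map_of_leadingCoeff_ne_zero φ hlc, hf, C_0, zero_mul, leadingCoeff_zero]
  rw [← natDegree_map_eq_of_dvd φ hlc ha]
  refine dvd_natDegree_of_dvd_prod hl ((isUnit_C.mpr hu.isUnit).dvd_mul_left.mp ?_)
  exact hf ▸ Polynomial.map_dvd φ ha

theorem IsPrimitive.isUnit_of_dvd {R : Type*} [CommRing R] {f a : R[X]} (hf : f.IsPrimitive)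
    (ha : a ∣ f) (h0 : a.natDegree = 0) : IsUnit a := by
  rw [eq_C_of_natDegree_eq_zero h0] at ha ⊢
  exact isUnit_C.mpr (hf _ ha)

theorem IsPrimitive.irreducible_of_natDegree_dvd {R : Type*} [CommRing R] [IsDomain R] {f : R[X]}
    (hf : f.IsPrimitive) (hdeg : f.natDegree ≠ 0)
    (h : ∀ a, a ∣ f → a.natDegree = 0 ∨ a.natDegree = f.natDegree) : Irreducible f := by
  refine ⟨fun hu => hdeg (natDegree_eq_zero_of_isUnit hu), fun a b hab => ?_⟩
  have hsum : a.natDegree + b.natDegree = f.natDegree := by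
    rw [hab, natDegree_mul (left_ne_zero_of_mul (hab ▸ hf.ne_zero))
      (right_ne_zero_of_mul (hab ▸ hf.ne_zero))]
  rcases h a (hab ▸ dvd_mul_right a b) with ha | ha
  · exact .inl (hf.isUnit_of_dvd (hab ▸ dvd_mul_right a b) ha)
  · exact .inr (hf.isUnit_of_dvd (hab ▸ dvd_mul_left b a) (by omega))

end Polynomial

instance : Fact (Nat.Prime 13) := ⟨by norm_num⟩

instance : Fact (Nat.Prime 53) := ⟨by norm_num⟩

noncomputable def f₇ : ℤ[X] :=
  7 * X ^ 12 + 308 * X ^ 11 - 2954 * X ^ 10 - 19852 * X ^ 9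
    - 35231 * X ^ 8 - 82264 * X ^ 7 - 111916 * X ^ 6 - 42168 * X ^ 5
    + 15673 * X ^ 4 + 14756 * X ^ 3 + 1302 * X ^ 2 + 196 * X - 1

theorem natDegree_f₇ : f₇.natDegree = 12 := by
  unfold f₇; compute_degree!

theorem leadingCoeff_f₇ : f₇.leadingCoeff = 7 := by
  rw [leadingCoeff, natDegree_f₇]
  simp [f₇, coeff_X, coeff_X_pow, coeff_one]

theorem isPrimitive_f₇ : f₇.IsPrimitive := by
  refine isPrimitive_iff_isUnit_of_C_dvd.mpr fun r hr => ?_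
  have h0 : r ∣ f₇.coeff 0 := (C_dvd_iff_dvd_coeff r f₇).mp hr 0
  rw [show f₇.coeff 0 = -1 by simp [f₇, coeff_X, coeff_X_pow]] at h0
  exact isUnit_of_dvd_unit h0 isUnit_one.neg

theorem map_f₇_zmod13 : f₇.map (Int.castRingHom (ZMod 13)) = C 7 *
    [X ^ 4 + C 3 * X ^ 3 + C 4 * X ^ 2 + C 12 * X + C 2,
      X ^ 4 + C 3 * X ^ 3 + C 1 * X ^ 2 + C 6 * X + C 5,
      X ^ 4 + C 12 * X ^ 3 + C 12 * X ^ 2 + C 11 * X + C 5].prod := by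
  simp only [f₇, List.prod_cons, List.prod_nil, mul_one, Polynomial.map_add, Polynomial.map_sub,
    Polynomial.map_mul, Polynomial.map_pow, Polynomial.map_X, Polynomial.map_ofNat,
    Polynomial.map_one, map_ofNat, map_one]
  rw [← sub_eq_zero]
  ring_nf
  reduce_mod_char

theorem map_f₇_zmod53 : f₇.map (Int.castRingHom (ZMod 53)) = C 7 *
    [X ^ 3 + C 48 * X ^ 2 + C 22 * X + C 14, X ^ 3 + C 44 * X ^ 2 + C 47 * X + C 18,
      X ^ 3 + C 11 * X ^ 2 + C 13 * X + C 23, X ^ 3 + C 47 * X ^ 2 + C 11 * X + C 51].prod := by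
  simp only [f₇, List.prod_cons, List.prod_nil, mul_one, Polynomial.map_add, Polynomial.map_sub,
    Polynomial.map_mul, Polynomial.map_pow, Polynomial.map_X, Polynomial.map_ofNat,
    Polynomial.map_one, map_ofNat]
  rw [← sub_eq_zero]
  ring_nf
  reduce_mod_char

theorem four_dvd_natDegree_of_dvd_f₇ {a : ℤ[X]} (ha : a ∣ f₇) : 4 ∣ a.natDegree := by
  refine dvd_natDegree_of_map_eq_C_mul_prod _ map_f₇_zmod13
    (by rw [leadingCoeff_f₇]; decide) ?_ ha
  simp only [List.mem_cons, List.not_mem_nil, or_false]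
  rintro r (rfl | rfl | rfl) <;>
    exact ⟨irreducible_monic_quartic (by decide) (by decide), by compute_degree!⟩

theorem three_dvd_natDegree_of_dvd_f₇ {a : ℤ[X]} (ha : a ∣ f₇) : 3 ∣ a.natDegree := by
  refine dvd_natDegree_of_map_eq_C_mul_prod _ map_f₇_zmod53
    (by rw [leadingCoeff_f₇]; decide) ?_ ha
  simp only [List.mem_cons, List.not_mem_nil, or_false]
  rintro r (rfl | rfl | rfl | rfl) <;>
    exact ⟨irreducible_monic_cubic (by decide), by compute_degree!⟩

theorem irreducible_f₇ : Irreducible f₇ := by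
  refine isPrimitive_f₇.irreducible_of_natDegree_dvd (by rw [natDegree_f₇]; decide) fun a ha => ?_
  have h4 := four_dvd_natDegree_of_dvd_f₇ ha
  have h3 := three_dvd_natDegree_of_dvd_f₇ ha
  have hle := natDegree_le_of_dvd ha isPrimitive_f₇.ne_zero
  rw [natDegree_f₇] at hle ⊢
  omega

theorem stmt_3 :
    Irreducible (7 * X ^ 12 + 308 * X ^ 11 - 2954 * X ^ 10 - 19852 * X ^ 9
      - 35231 * X ^ 8 - 82264 * X ^ 7 - 111916 * X ^ 6 - 42168 * X ^ 5
      + 15673 * X ^ 4 + 14756 * X ^ 3 + 1302 * X ^ 2 + 196 * X - 1 : ℚ[X]) := by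
  have hmap : f₇.map (Int.castRingHom ℚ) = 7 * X ^ 12 + 308 * X ^ 11 - 2954 * X ^ 10 -
      19852 * X ^ 9 - 35231 * X ^ 8 - 82264 * X ^ 7 - 111916 * X ^ 6 - 42168 * X ^ 5 +
      15673 * X ^ 4 + 14756 * X ^ 3 + 1302 * X ^ 2 + 196 * X - 1 := by
    simp only [f₇, Polynomial.map_add, Polynomial.map_sub, Polynomial.map_mul, Polynomial.map_pow,
      Polynomial.map_X, Polynomial.map_ofNat, Polynomial.map_one]
  rw [← hmap]
  exact (IsPrimitive.Int.irreducible_iff_irreducible_map_cast isPrimitive_f₇).mp irreducible_f₇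
end
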